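/- arXiv:1101.1805 — 2 statements merged into one kernel-verified Lean document; each statement's English description precedes it below -/
import Mathlib

section
/- Let P, Q be integers with Q ≥ 0 and P^2 − 4Q > 0 (equivalently, Q ≥ 0 and either P > 2√Q or P < −2√Q). Then the Lucas sequence U = U(P,Q), extended to ℤ by zero on negative indices, is 1-fold log-concave: (𝓛 U) n ≥ 0 for every n ∈ ℤ. -/
/-- The Lucas sequence of the first kind `U(P,Q)`. -/
def lucasU (P Q : ℤ) : ℕ → ℤ
  | 0 => 0
  | 1 => 1
  | n + 2 => P * lucasU P Q (n + 1) - Q * lucasU P Q n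

/-- The Lucas sequence extended to `ℤ` by zero on negative indices, as a real sequence. -/
def lucasUZ (P Q : ℤ) : ℤ → ℝ := fun n => if n < 0 then 0 else (lucasU P Q n.toNat : ℝ)

/-- The log-operator on sequences indexed by `ℤ`. -/
def logOp (a : ℤ → ℝ) : ℤ → ℝ := fun n => (a n) ^ 2 - a (n - 1) * a (n + 1)

/-!
Cassini's identity for Lucas sequences, `U (n+1)^2 - U n * U (n+2) = Q ^ n`, says that the
log-operator of `U` at a positive index `n + 1` equals `Q ^ n`, which is nonnegative when
`Q ≥ 0`. At indices `n ≤ 0` the log-operator vanishes, since `U 0 = 0` and `U` is zero on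
negative indices.
-/

theorem lucasU_succ_sq_sub_mul (P Q : ℤ) (n : ℕ) :
    lucasU P Q (n + 1) ^ 2 - lucasU P Q n * lucasU P Q (n + 2) = Q ^ n := by
  induction n with
  | zero => simp [lucasU]
  | succ m ih =>
    have hU3 : lucasU P Q (m + 3) = P * lucasU P Q (m + 2) - Q * lucasU P Q (m + 1) := rfl
    have hU2 : lucasU P Q (m + 2) = P * lucasU P Q (m + 1) - Q * lucasU P Q m := rfl
    linear_combination Q * ih - lucasU P Q (m + 1) * hU3 + lucasU P Q (m + 2) * hU2

theorem lucasUZ_of_neg (P Q : ℤ) {n : ℤ} (hn : n < 0) : lucasUZ P Q n = 0 :=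
  if_pos hn

theorem lucasUZ_natCast (P Q : ℤ) (n : ℕ) : lucasUZ P Q n = lucasU P Q n := by
  simp [lucasUZ]

theorem logOp_lucasUZ_of_nonpos (P Q : ℤ) {n : ℤ} (hn : n ≤ 0) : logOp (lucasUZ P Q) n = 0 := by
  rcases hn.lt_or_eq with hn | rfl
  · simp [logOp, lucasUZ_of_neg P Q hn, lucasUZ_of_neg P Q (show n - 1 < 0 by omega)]
  · simp [logOp, lucasUZ, lucasU]

theorem logOp_lucasUZ_natCast_succ (P Q : ℤ) (n : ℕ) :
    logOp (lucasUZ P Q) (n + 1) = (Q : ℝ) ^ n := by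
  have h : ((n + 1 : ℕ) : ℤ) - 1 = n ∧ ((n + 1 : ℕ) : ℤ) + 1 = ((n + 2 : ℕ) : ℤ) := by omega
  rw [← Nat.cast_succ, logOp, h.1, h.2, lucasUZ_natCast, lucasUZ_natCast, lucasUZ_natCast]
  exact_mod_cast lucasU_succ_sq_sub_mul P Q n

theorem lucasU_pos_discriminant_log_concave_general (P Q : ℤ) (hQ : 0 ≤ Q) :
    ∀ n : ℤ, 0 ≤ logOp (lucasUZ P Q) n := by
  intro n
  rcases le_or_gt n 0 with hn | hn
  · exact (logOp_lucasUZ_of_nonpos P Q hn).ge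
  · obtain ⟨m, rfl⟩ : ∃ m : ℕ, n = m + 1 := ⟨(n - 1).toNat, by omega⟩
    rw [logOp_lucasUZ_natCast_succ]
    positivity

theorem lucasU_pos_discriminant_log_concave (P Q : ℤ) (hQ : 0 ≤ Q)
    (hD : (0 : ℤ) < P ^ 2 - 4 * Q) :
    ∀ n : ℤ, 0 ≤ logOp (lucasUZ P Q) n :=
  lucasU_pos_discriminant_log_concave_general P Q hQ
end

section
/- The sequence of Mersenne numbers M n = 2^n − 1 (that is, the Lucas sequence U(3,2)), extended to ℤ by zero on negative indices, is infinitely log-concave: for every i ≥ 1 and every n ∈ ℤ, (𝓛^i M) n ≥ 0. -/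
/-!
The log-operator sends `rⁿ - sⁿ` (zero on negative indices) to `(r - s)² (rs)ⁿ⁻¹` for `n ≥ 1`
and to `0` otherwise: a geometric sequence starting at index `1`. It sends every such truncated
geometric sequence `c ρⁿ⁻ᵏ` to the point mass `c² δₖ`, and a point mass `c δₖ` to `c² δₖ`.
So `𝓛ⁱ (rⁿ - sⁿ)` is a nonnegative point mass for `i ≥ 2`, and is nonnegative for `i = 1`
as soon as `rs ≥ 0`. The Mersenne numbers are the case `r = 2`, `s = 1`.
-/

/-- The Mersenne numbers `2 ^ n - 1`, extended to `ℤ` by zero on negative indices,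
as a real sequence. -/
def mersenneZ : ℤ → ℝ := fun n => if n < 0 then 0 else (2 : ℝ) ^ n.toNat - 1

def IsInfLogConcave (a : ℤ → ℝ) : Prop := ∀ i : ℕ, 1 ≤ i → ∀ n : ℤ, 0 ≤ (logOp^[i] a) n

def geomFrom (k : ℤ) (c r : ℝ) : ℤ → ℝ := fun n => if n < k then 0 else c * r ^ (n - k).toNat

/-- `(r - s)` times the Lucas sequence with characteristic roots `r`, `s`. -/
def powSubPow (r s : ℝ) : ℤ → ℝ := fun n => if n < 0 then 0 else r ^ n.toNat - s ^ n.toNat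

theorem logOp_pi_single (k : ℤ) (c : ℝ) : logOp (Pi.single k c) = Pi.single k (c ^ 2) := by
  funext n
  by_cases hn : n = k
  · subst hn
    simp [logOp]
  · rcases (by omega : n - 1 ≠ k ∨ n + 1 ≠ k) with h | h <;> simp [logOp, Pi.single_apply, hn, h]

theorem iterate_logOp_pi_single (k : ℤ) (c : ℝ) (i : ℕ) :
    logOp^[i] (Pi.single k c) = Pi.single k (c ^ 2 ^ i) := by
  induction i with
  | zero => simp
  | succ i ih => rw [Function.iterate_succ_apply', ih, logOp_pi_single, ← pow_mul, ← pow_succ]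

theorem logOp_geomFrom (k : ℤ) (c r : ℝ) : logOp (geomFrom k c r) = Pi.single k (c ^ 2) := by
  funext n
  rcases lt_trichotomy n k with h | rfl | h
  · simp [logOp, geomFrom, h, h.ne, show n - 1 < k by omega]
  · simp [logOp, geomFrom]
  · obtain ⟨m, rfl⟩ : ∃ m : ℕ, n = k + m + 1 := ⟨(n - k - 1).toNat, by omega⟩
    have e0 : (k + m + 1 - k).toNat = m + 1 := by omega
    have e1 : (k + m + 1 - 1 - k).toNat = m := by omega
    have e2 : (k + m + 1 + 1 - k).toNat = m + 2 := by omega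
    simp only [logOp, geomFrom, e0, e1, e2, Pi.single_apply, if_neg (show ¬ k + m + 1 < k by omega),
      if_neg (show ¬ k + m + 1 - 1 < k by omega), if_neg (show ¬ k + m + 1 + 1 < k by omega),
      if_neg (show k + m + 1 ≠ k by omega)]
    ring

theorem logOp_powSubPow (r s : ℝ) :
    logOp (powSubPow r s) = geomFrom 1 ((r - s) ^ 2) (r * s) := by
  funext n
  rcases lt_or_ge n 1 with h | h
  · have vanish : ∀ m < 1, powSubPow r s m = 0 := fun m hm => by
      rcases lt_or_ge m 0 with hm' | hm'
      · simp [powSubPow, hm']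
      · simp [powSubPow, show m = 0 by omega]
    simp [logOp, geomFrom, h, vanish n h, vanish (n - 1) (by omega)]
  · obtain ⟨m, rfl⟩ : ∃ m : ℕ, n = m + 1 := ⟨(n - 1).toNat, by omega⟩
    have e0 : ((m : ℤ) + 1).toNat = m + 1 := by omega
    have e1 : ((m : ℤ) + 1 - 1).toNat = m := by omega
    have e2 : ((m : ℤ) + 1 + 1).toNat = m + 2 := by omega
    simp only [logOp, geomFrom, powSubPow, e0, e1, e2, if_neg (show ¬ (m : ℤ) + 1 < 0 by omega),
      if_neg (show ¬ (m : ℤ) + 1 - 1 < 0 by omega), if_neg (show ¬ (m : ℤ) + 1 + 1 < 0 by omega),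
      if_neg (show ¬ (m : ℤ) + 1 < 1 by omega)]
    ring

theorem geomFrom_nonneg {k : ℤ} {c r : ℝ} (hc : 0 ≤ c) (hr : 0 ≤ r) : 0 ≤ geomFrom k c r := by
  intro n
  unfold geomFrom
  split_ifs
  exacts [le_rfl, by positivity]

theorem powSubPow_isInfLogConcave {r s : ℝ} (hrs : 0 ≤ r * s) : IsInfLogConcave (powSubPow r s) := by
  rintro (_ | _ | i) hi n
  · omega
  · rw [Function.iterate_one, logOp_powSubPow]
    exact geomFrom_nonneg (sq_nonneg _) hrs n
  · rw [Function.iterate_succ_apply, Function.iterate_succ_apply, logOp_powSubPow, logOp_geomFrom,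
      iterate_logOp_pi_single]
    refine (Pi.single_nonneg (α := fun _ : ℤ => ℝ)).2 ?_ n
    positivity

theorem mersenneZ_eq_powSubPow : mersenneZ = powSubPow 2 1 := by
  funext n
  simp [mersenneZ, powSubPow]

theorem mersenne_inf_log_concave :
    ∀ i : ℕ, 1 ≤ i → ∀ n : ℤ, 0 ≤ (logOp^[i] mersenneZ) n :=
  mersenneZ_eq_powSubPow ▸ powSubPow_isInfLogConcave (by norm_num)
end
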